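/- Let D := ℝ + T·ℂ[[T]] be the subring of the formal power series ring ℂ[[T]] consisting of all power series whose constant term is real; its quotient field is the Laurent series field ℂ((T)). Then the valuation overrings of D, i.e., the valuation subrings of ℂ((T)) containing D, are exactly ℂ[[T]] and ℂ((T)). -/

import Mathlib

/-!
`ℂ[[T]]` is the valuation ring of the `T`-adic valuation on `ℂ((T))` and has Krull dimension one,
so its only valuation overrings are itself and `ℂ((T))` (overrings of a valuation ring correspond
to its prime ideals). Conversely, a valuation overring `W` of `D` contains `i`: since `i⁻¹ = -i`,
either of `i ∈ W`, `i⁻¹ ∈ W` gives it. Hence `W ⊇ ℝ + ℝ i + T ℂ[[T]] = ℂ[[T]]`.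
-/

noncomputable section

/-- The pseudo-valuation domain `D = ℝ + T·ℂ[[T]]`, i.e. the set of formal power series
over `ℂ` whose constant term is real, viewed as a subset of the Laurent series field
`ℂ((T))`. -/
def pvdSet : Set (LaurentSeries ℂ) :=
  {x | ∃ f : PowerSeries ℂ, (∃ r : ℝ, PowerSeries.constantCoeff (R := ℂ) f = (r : ℂ)) ∧
    x = algebraMap (PowerSeries ℂ) (LaurentSeries ℂ) f}

open scoped LaurentSeries PowerSeries WithZero

namespace LaurentSeries

variable (K : Type*) [Field K]

def powerSeriesValuationSubring : ValuationSubring K⸨X⸩ :=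
  (Valued.v : Valuation K⸨X⸩ ℤᵐ⁰).valuationSubring

theorem coe_powerSeriesValuationSubring :
    (powerSeriesValuationSubring K : Set K⸨X⸩) = Set.range (algebraMap K⟦X⟧ K⸨X⸩) := by
  ext f
  exact val_le_one_iff_eq_coe K f

def powerSeriesEquivValuationSubring : K⟦X⟧ ≃+* powerSeriesValuationSubring K :=
  RingEquiv.ofBijective
    ((algebraMap K⟦X⟧ K⸨X⸩).codRestrict (powerSeriesValuationSubring K).toSubring
      fun f => (coe_powerSeriesValuationSubring K).ge ⟨f, rfl⟩)
    ⟨fun f g h => HahnSeries.ofPowerSeries_injective congr(($h : K⸨X⸩)),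
      fun ⟨f, hf⟩ => by
        obtain ⟨F, rfl⟩ := (coe_powerSeriesValuationSubring K).le hf
        exact ⟨F, rfl⟩⟩

instance : Ring.KrullDimLE 1 (powerSeriesValuationSubring K) := by
  rw [Ring.krullDimLE_iff, ← ringKrullDim_eq_of_ringEquiv (powerSeriesEquivValuationSubring K)]
  exact Ring.krullDimLE_iff.mp inferInstance

end LaurentSeries

theorem ValuationSubring.mem_of_sq_eq_neg_one {K : Type*} [Field K] (W : ValuationSubring K)
    {x : K} (hx : x ^ 2 = -1) : x ∈ W := by
  have hinv : x⁻¹ = -x := inv_eq_of_mul_eq_one_right (by rw [mul_neg, ← sq, hx, neg_neg])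
  rcases W.mem_or_inv_mem x with h | h
  · exact h
  · simpa [hinv] using W.neg_mem _ h

open PowerSeries in
theorem algebraMap_mem_of_pvdSet_subset {S : Subring ℂ⸨X⸩} (hD : pvdSet ⊆ (S : Set ℂ⸨X⸩))
    (hI : algebraMap ℂ⟦X⟧ ℂ⸨X⸩ (C Complex.I) ∈ S) (f : ℂ⟦X⟧) : algebraMap ℂ⟦X⟧ ℂ⸨X⸩ f ∈ S := by
  set c := constantCoeff f
  have hreal (r : ℝ) : algebraMap ℂ⟦X⟧ ℂ⸨X⸩ (C (r : ℂ)) ∈ S :=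
    hD ⟨_, ⟨r, constantCoeff_C _⟩, rfl⟩
  have htail : algebraMap ℂ⟦X⟧ ℂ⸨X⸩ (f - C c) ∈ S :=
    hD ⟨_, ⟨0, by simp [c]⟩, rfl⟩
  have hsplit : f = (C (c.re : ℂ) + C (c.im : ℂ) * C Complex.I) + (f - C c) := by
    rw [← map_mul, ← map_add, Complex.re_add_im, add_sub_cancel]
  rw [hsplit, map_add, map_add, map_mul]
  exact S.add_mem (S.add_mem (hreal _) (S.mul_mem (hreal _) hI)) htail

theorem pvdSet_subset_range_algebraMap : pvdSet ⊆ Set.range (algebraMap ℂ⟦X⟧ ℂ⸨X⸩) := by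
  rintro _ ⟨f, -, rfl⟩
  exact ⟨f, rfl⟩

/-- The valuation overrings of `D = ℝ + T·ℂ[[T]]` inside `ℂ((T))` are
exactly `ℂ[[T]]` and `ℂ((T))`. -/
theorem stmt17 (W : ValuationSubring (LaurentSeries ℂ)) :
    pvdSet ⊆ (W : Set (LaurentSeries ℂ)) ↔
      ((W : Set (LaurentSeries ℂ))
          = Set.range (algebraMap (PowerSeries ℂ) (LaurentSeries ℂ)) ∨ W = ⊤) := by
  rw [← LaurentSeries.coe_powerSeriesValuationSubring, SetLike.coe_set_eq]
  constructor
  · intro hD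
    have hI : algebraMap ℂ⟦X⟧ ℂ⸨X⸩ (PowerSeries.C Complex.I) ∈ W :=
      W.mem_of_sq_eq_neg_one (by rw [← map_pow, ← map_pow, Complex.I_sq]; simp)
    have hle : LaurentSeries.powerSeriesValuationSubring ℂ ≤ W := by
      intro x hx
      obtain ⟨f, rfl⟩ := (LaurentSeries.coe_powerSeriesValuationSubring ℂ).le hx
      exact algebraMap_mem_of_pvdSet_subset (S := W.toSubring) hD hI f
    exact (ValuationSubring.eq_self_or_eq_top_of_le hle).imp_left Eq.symm
  · rintro (rfl | rfl)
    · rw [LaurentSeries.coe_powerSeriesValuationSubring]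
      exact pvdSet_subset_range_algebraMap
    · exact fun x _ => ValuationSubring.mem_top x

end
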